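/- arXiv:2207.07523 — 3 statements merged into one kernel-verified Lean document; each statement's English description precedes it below -/
import Mathlib

section
/- For any ε > 0 there exists N(ε) ∈ ℕ such that for every natural number n > N(ε) one can find an even number m with (1−ε)n ≤ m ≤ (1+ε)n for which there exists an Hadamard matrix of size m × m. -/
/-!
Hadamard orders form a multiplicative monoid (Kronecker products), containing `2` and `12`.
Since `log 12 / log 2` is irrational, Dirichlet's approximation theorem gives powers
`x < y < (1 + ε) x` of `2` and `12`. The products `x ^ (M - i) * y ^ i`, `i ≤ M`, then climb
from below `n` to above `n` in steps of ratio `y / x < 1 + ε`, so one of them lies in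
`(n, (1 + ε) n]`. Evenness comes from `4 ∣ m` for integer Hadamard matrices of order `m > 2`.
-/

open Matrix

/-- An `m × m` matrix with `±1` entries is Hadamard if `H Hᵀ = m • I`. -/
def IsHadamard {m : ℕ} (H : Matrix (Fin m) (Fin m) ℝ) : Prop :=
  (∀ i j, H i j = 1 ∨ H i j = -1) ∧ H * Hᵀ = (m : ℝ) • 1

theorem Matrix.isHadamard_one (R : Type*) [Semiring R] [StarRing R] :
    (1 : Matrix (Fin 1) (Fin 1) R).IsHadamard :=
  ⟨fun i j => by rw [Subsingleton.elim i j, one_apply_eq]; exact one_mem _, by simp, by simp⟩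

theorem Matrix.isHadamard_of_mul_transpose {m : ℕ} [NeZero m] {A : Matrix (Fin m) (Fin m) ℤ}
    (h_entries : ∀ i j, A i j = 1 ∨ A i j = -1) (h_mul : A * Aᵀ = (m : ℤ) • 1) :
    A.IsHadamard :=
  .of_mul_conjTranspose (fun i j => Unitary.mem_iff_eq_one_or_eq_neg_one.mpr (h_entries i j))
    (by rwa [conjTranspose_eq_transpose_of_trivial, Fintype.card_fin])
    (.of_ne_zero (by simp [NeZero.ne m]))

theorem Matrix.IsHadamard.map_intCast {m : ℕ} {A : Matrix (Fin m) (Fin m) ℤ}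
    (hA : A.IsHadamard) : _root_.IsHadamard (A.map (Int.castRingHom ℝ)) := by
  refine ⟨fun i j => ?_, ?_⟩
  · rcases Unitary.mem_iff_eq_one_or_eq_neg_one.mp (hA.apply_mem i j) with h | h <;> simp [h]
  · have h := hA.mul_conjTranspose
    rw [conjTranspose_eq_transpose_of_trivial, Fintype.card_fin] at h
    rw [← transpose_map, ← Matrix.map_mul, h]
    ext i j
    simp [natCast_apply, one_apply]

def hadamardOrders (R : Type*) [Semiring R] [StarRing R] : Submonoid ℕ where
  carrier := {m | ∃ A : Matrix (Fin m) (Fin m) R, A.IsHadamard}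
  one_mem' := ⟨1, isHadamard_one R⟩
  mul_mem' := fun ⟨_, hA⟩ ⟨_, hB⟩ =>
    ⟨_, (hA.kronecker hB).reindex finProdFinEquiv finProdFinEquiv⟩

theorem even_of_mem_hadamardOrders {m : ℕ} (hm : m ∈ hadamardOrders ℤ) (h2 : 2 ≤ m) :
    Even m := by
  obtain ⟨A, hA⟩ := hm
  rcases h2.eq_or_lt with rfl | h2
  · exact even_two
  · have h4 := hA.four_dvd_card (by simpa using h2)
    rw [Fintype.card_fin] at h4
    exact even_iff_two_dvd.mpr ((by norm_num : 2 ∣ 4).trans h4)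

theorem two_mem_hadamardOrders : 2 ∈ hadamardOrders ℤ :=
  ⟨!![1, 1; 1, -1], isHadamard_of_mul_transpose (by simp only [of_apply]; decide) (by decide)⟩

-- Paley's construction for the prime `11`: a border of ones around the core `-χ(j - i)`, where
-- `χ` is the Legendre symbol mod `11`, with `-1` on the diagonal.
theorem twelve_mem_hadamardOrders : 12 ∈ hadamardOrders ℤ :=
  ⟨!![1, 1, 1, 1, 1, 1, 1, 1, 1, 1, 1, 1;
     1, -1, -1, 1, -1, -1, -1, 1, 1, 1, -1, 1;
     1, 1, -1, -1, 1, -1, -1, -1, 1, 1, 1, -1;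
     1, -1, 1, -1, -1, 1, -1, -1, -1, 1, 1, 1;
     1, 1, -1, 1, -1, -1, 1, -1, -1, -1, 1, 1;
     1, 1, 1, -1, 1, -1, -1, 1, -1, -1, -1, 1;
     1, 1, 1, 1, -1, 1, -1, -1, 1, -1, -1, -1;
     1, -1, 1, 1, 1, -1, 1, -1, -1, 1, -1, -1;
     1, -1, -1, 1, 1, 1, -1, 1, -1, -1, 1, -1;
     1, -1, -1, -1, 1, 1, 1, -1, 1, -1, -1, 1;
     1, 1, -1, -1, -1, 1, 1, 1, -1, 1, -1, -1;
     1, -1, 1, -1, -1, -1, 1, 1, 1, -1, 1, -1],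
    isHadamard_of_mul_transpose (by simp only [of_apply]; decide) (by decide)⟩

theorem Nat.exists_le_lt_succ_of_le_of_lt {s : ℕ → ℕ} {n : ℕ} :
    ∀ {M : ℕ}, s 0 ≤ n → n < s M → ∃ i < M, s i ≤ n ∧ n < s (i + 1)
  | 0, h0, hM => absurd h0 hM.not_ge
  | M + 1, h0, hM => by
    by_cases h : n < s M
    · obtain ⟨i, hi, hsi⟩ := exists_le_lt_succ_of_le_of_lt h0 h
      exact ⟨i, hi.trans M.lt_succ_self, hsi⟩
    · exact ⟨M, M.lt_succ_self, not_lt.mp h, hM⟩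

theorem Submonoid.exists_mem_lt_le_mul {S : Submonoid ℕ} {x y : ℕ} (hx : x ∈ S) (hy : y ∈ S)
    (hx1 : 1 < x) (hxy : x < y) {ρ : ℝ} (hyx : (y : ℝ) ≤ ρ * x) :
    ∃ N : ℕ, ∀ n > N, ∃ m ∈ S, n < m ∧ (m : ℝ) ≤ ρ * n := by
  have hx0 : (0 : ℝ) < x := by positivity
  have hyx1 : 1 < (y : ℝ) / x := (one_lt_div hx0).mpr (by exact_mod_cast hxy)
  obtain ⟨K, hK⟩ := pow_unbounded_of_one_lt (x : ℝ) hyx1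
  refine ⟨x ^ K, fun n hn => ?_⟩
  have hn0 : n ≠ 0 := by omega
  set M := Nat.log x n
  have hKM : K ≤ M := (Nat.le_log_iff_pow_le hx1 hn0).mpr hn.le
  -- `x ^ M ≤ n < x ^ (M + 1) < y ^ M`, so `n` is crossed by the chain `x ^ (M - i) * y ^ i`,
  -- whose consecutive terms have ratio `y / x ≤ ρ`.
  have hn_lt : n < y ^ M := by
    have hn_lt_pow : (n : ℝ) < x ^ (M + 1) := by exact_mod_cast Nat.lt_pow_succ_log_self hx1 n
    have : (x : ℝ) ^ (M + 1) < y ^ M :=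
      calc (x : ℝ) ^ (M + 1) = x ^ M * x := pow_succ _ _
        _ < x ^ M * (y / x) ^ K := by gcongr
        _ ≤ x ^ M * (y / x) ^ M := by gcongr; exact hyx1.le
        _ = y ^ M := by rw [div_pow]; field_simp
    exact_mod_cast hn_lt_pow.trans this
  obtain ⟨i, hiM, hi_le, hi_lt⟩ := Nat.exists_le_lt_succ_of_le_of_lt
    (s := fun i => x ^ (M - i) * y ^ i) (M := M) (by simpa using Nat.pow_log_le_self x hn0)
    (by simpa using hn_lt)
  refine ⟨x ^ (M - (i + 1)) * y ^ (i + 1), mul_mem (pow_mem hx _) (pow_mem hy _), hi_lt, ?_⟩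
  have hstep : x * (x ^ (M - (i + 1)) * y ^ (i + 1)) = y * (x ^ (M - i) * y ^ i) := by
    rw [show M - i = M - (i + 1) + 1 by omega]; ring
  have hi_le' : ((x ^ (M - i) * y ^ i : ℕ) : ℝ) ≤ n := by exact_mod_cast hi_le
  refine le_of_mul_le_mul_left ?_ hx0
  calc (x : ℝ) * (x ^ (M - (i + 1)) * y ^ (i + 1) : ℕ)
      = y * (x ^ (M - i) * y ^ i : ℕ) := by exact_mod_cast hstep
    _ ≤ (ρ * x) * n := by gcongr; exact (Nat.cast_nonneg y).trans hyx
    _ = x * (ρ * n) := by ring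

theorem exists_mem_closure_pair_lt_lt_mul {a b : ℕ} (ha : 1 < a) (hb : 1 < b)
    (hindep : ∀ p q : ℕ, 0 < q → a ^ p ≠ b ^ q) {ρ : ℝ} (hρ : 1 < ρ) :
    ∃ x ∈ Submonoid.closure {a, b}, ∃ y ∈ Submonoid.closure {a, b},
      1 < x ∧ x < y ∧ (y : ℝ) < ρ * x := by
  have hL : 0 < Real.log a := Real.log_pos (by exact_mod_cast ha)
  set ξ := Real.log b / Real.log a
  have hξ : 0 < ξ := div_pos (Real.log_pos (by exact_mod_cast hb)) hL
  obtain ⟨n, hn⟩ := exists_nat_one_div_lt (lt_min hξ (div_pos (Real.log_pos hρ) hL))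
  -- Dirichlet: `k * ξ` is close to an integer `j`, i.e. `b ^ k` is close to `a ^ j` on a log scale.
  obtain ⟨j, k, hk, -, hjk⟩ := Real.exists_int_int_abs_mul_sub_le ξ n.succ_pos
  have hD : |k * ξ - j| < min ξ (Real.log ρ / Real.log a) := by
    refine hjk.trans_lt (lt_of_le_of_lt ?_ hn)
    gcongr
    linarith
  have hj : 0 < j := by
    by_contra! hj
    have hkξ : ξ ≤ k * ξ := le_mul_of_one_le_left hξ.le (by exact_mod_cast hk)
    have hj' : (j : ℝ) ≤ 0 := by exact_mod_cast hj
    linarith [le_abs_self (k * ξ - j), min_le_left ξ (Real.log ρ / Real.log a)]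
  lift j to ℕ using hj.le
  lift k to ℕ using hk.le
  have hclose : |Real.log ((b ^ k : ℕ) : ℝ) - Real.log ((a ^ j : ℕ) : ℝ)| < Real.log ρ := by
    have hlog : Real.log ((b ^ k : ℕ) : ℝ) - Real.log ((a ^ j : ℕ) : ℝ)
        = Real.log a * (k * ξ - j) := by
      push_cast
      rw [Real.log_pow, Real.log_pow]
      linear_combination (-(k : ℝ)) * (mul_div_cancel₀ (Real.log b) hL.ne' : Real.log a * ξ = _)
    rw [hlog, abs_mul, abs_of_pos hL, ← lt_div_iff₀' hL]
    exact hD.trans_le (min_le_right _ _)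
  have lt_mul_of_close : ∀ {x y : ℕ}, 0 < x → 0 < y →
      |Real.log y - Real.log x| < Real.log ρ → (y : ℝ) < ρ * x := by
    intro x y hx hy h
    rw [← Real.log_lt_log_iff (by positivity) (by positivity), Real.log_mul (by positivity)
      (by positivity)]
    linarith [le_abs_self (Real.log y - Real.log x)]
  have ha_mem : a ^ j ∈ Submonoid.closure {a, b} := pow_mem (Submonoid.subset_closure (by simp)) j
  have hb_mem : b ^ k ∈ Submonoid.closure {a, b} := pow_mem (Submonoid.subset_closure (by simp)) k
  rcases lt_trichotomy (a ^ j) (b ^ k) with h | h | h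
  · exact ⟨_, ha_mem, _, hb_mem, Nat.one_lt_pow (by exact_mod_cast hj.ne') ha, h,
      lt_mul_of_close (by positivity) (by positivity) hclose⟩
  · exact absurd h (hindep j k (by exact_mod_cast hk))
  · exact ⟨_, hb_mem, _, ha_mem, Nat.one_lt_pow (by exact_mod_cast hk.ne') hb, h,
      lt_mul_of_close (by positivity) (by positivity) (by rwa [abs_sub_comm])⟩

theorem two_pow_ne_twelve_pow (p q : ℕ) (hq : 0 < q) : 2 ^ p ≠ 12 ^ q := by
  intro h
  have h3 : 3 ∣ 2 ^ p := h ▸ dvd_pow (by norm_num : 3 ∣ 12) hq.ne'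
  exact absurd (Nat.prime_three.dvd_of_dvd_pow h3) (by norm_num)

/-- **Corollary 2.2.** For any `ε > 0` there is `N(ε)` such that every `n > N(ε)` admits an
even number `m ∈ [(1-ε)n, (1+ε)n]` for which an `m × m` Hadamard matrix exists. -/
theorem hadamard_exists_near_n {ε : ℝ} (hε : 0 < ε) :
    ∃ N : ℕ, ∀ n : ℕ, n > N →
      ∃ m : ℕ, Even m ∧ (1 - ε) * n ≤ (m : ℝ) ∧ (m : ℝ) ≤ (1 + ε) * n ∧
        ∃ H : Matrix (Fin m) (Fin m) ℝ, _root_.IsHadamard H := by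
  obtain ⟨x, hx, y, hy, hx1, hxy, hyx⟩ := exists_mem_closure_pair_lt_lt_mul (by norm_num)
    (by norm_num) two_pow_ne_twelve_pow (by linarith : 1 < 1 + ε)
  have hclosure : Submonoid.closure {2, 12} ≤ hadamardOrders ℤ :=
    Submonoid.closure_le.mpr <| Set.insert_subset_iff.mpr
      ⟨two_mem_hadamardOrders, Set.singleton_subset_iff.mpr twelve_mem_hadamardOrders⟩
  obtain ⟨N, hN⟩ := Submonoid.exists_mem_lt_le_mul (hclosure hx) (hclosure hy) hx1 hxy hyx.le
  refine ⟨N, fun n hn => ?_⟩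
  obtain ⟨m, hm, hnm, hmn⟩ := hN n hn
  have hnm' : (n : ℝ) < m := by exact_mod_cast hnm
  refine ⟨m, even_of_mem_hadamardOrders hm (by omega), by nlinarith [n.cast_nonneg (α := ℝ)],
    hmn, ?_⟩
  obtain ⟨A, hA⟩ := hm
  exact ⟨_, hA.map_intCast⟩
end

section
/- There exists an absolute constant C > 0 such that for every odd prime q there is a vector u_q ∈ {−1, 1}^{ℤ_q} satisfying | |û_q(j)| − √q | ≤ √q · δ_q for every j ∈ ℤ_q, where δ_q = C·q^{−1/4}·√(log q). -/
open scoped Real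
open Finset

/-!
Fix `u(k) = 1` on the squares of `𝔽_q` (including `0`) and, independently at each non-square, let
`u(k) = 1` with probability `p = q^{-1/2}` and `u(k) = -1` otherwise. With `χ` the quadratic
character, `u = p + (1 - p)(χ + δ₀) + 2X` for a centred random vector `X` supported on the
non-squares, so `û(j) = pq[j = 0] + (1 - p) G(j) + (1 - p) + 2X̂(j)` with `G(j)` a Gauss sum:
`G(0) = 0` and `|G(j)| = √q` otherwise. The deterministic main term thus has modulus `√q` at
`j = 0` and `√q - 1` elsewhere. Each coordinate of `X` has variance at most `p`, so a Chernoff bound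
with `λ ≍ q^{-1/4} √(log q)` and a union bound over the `4q` real functionals `±Re X̂(j)`,
`±Im X̂(j)` leave an outcome with `|X̂(j)| ≲ q^{1/4} √(log q)` for all `j`.
-/

section Bernoulli

variable {ι : Type*} [Fintype ι]

noncomputable def bernoulliWeight (p : ℝ) (ω : ι → Bool) : ℝ :=
  ∏ i, if ω i then p else 1 - p

noncomputable def centeredSum {E : Type*} [AddCommGroup E] [Module ℝ E]
    (p : ℝ) (v : ι → E) (ω : ι → Bool) : E :=
  ∑ i, ((if ω i then 1 else 0) - p) • v i

lemma centeredSum_smul {E : Type*} [AddCommGroup E] [Module ℝ E] (p a : ℝ) (v : ι → E)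
    (ω : ι → Bool) : centeredSum p (a • v) ω = a • centeredSum p v ω := by
  simp_rw [centeredSum, smul_sum, Pi.smul_apply, smul_comm a]

lemma bernoulliWeight_nonneg {p : ℝ} (hp₀ : 0 ≤ p) (hp₁ : p ≤ 1) (ω : ι → Bool) :
    0 ≤ bernoulliWeight p ω :=
  prod_nonneg fun i _ => by split <;> linarith

lemma re_I_pow_mul_centeredSum (p : ℝ) (v : ι → ℂ) (ω : ι → Bool) (k : ℕ) :
    (Complex.I ^ k * centeredSum p v ω).re
      = centeredSum p (fun i => (Complex.I ^ k * v i).re) ω := by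
  simp only [centeredSum, mul_sum, mul_smul_comm, Complex.re_sum, Complex.smul_re, smul_eq_mul]

variable [DecidableEq ι]

lemma sum_bernoulliWeight_mul_prod (p : ℝ) (f : ι → Bool → ℝ) :
    ∑ ω, bernoulliWeight p ω * ∏ i, f i (ω i)
      = ∏ i, (p * f i true + (1 - p) * f i false) := by
  simp_rw [bernoulliWeight, ← prod_mul_distrib]
  rw [← Fintype.prod_sum fun i b => (if b then p else 1 - p) * f i b]
  simp

lemma sum_bernoulliWeight (p : ℝ) : ∑ ω : ι → Bool, bernoulliWeight p ω = 1 := by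
  simpa using sum_bernoulliWeight_mul_prod (ι := ι) p fun _ _ => 1

lemma centered_bernoulli_mgf_le {p x : ℝ} (hp : 0 ≤ p) (hx : |x| ≤ 1) :
    p * Real.exp ((1 - p) * x) + (1 - p) * Real.exp (-(p * x)) ≤ Real.exp (p * x ^ 2) :=
  calc p * Real.exp ((1 - p) * x) + (1 - p) * Real.exp (-(p * x))
      = Real.exp (-(p * x)) * (1 + p * (Real.exp x - 1)) := by
        rw [show (1 - p) * x = x + -(p * x) by ring, Real.exp_add]; ring
    _ ≤ Real.exp (-(p * x)) * Real.exp (p * (Real.exp x - 1)) := by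
        gcongr; linarith [Real.add_one_le_exp (p * (Real.exp x - 1))]
    _ = Real.exp (p * (Real.exp x - 1 - x)) := by rw [← Real.exp_add]; ring_nf
    _ ≤ Real.exp (p * x ^ 2) := by
        gcongr; exact (le_abs_self _).trans (Real.abs_exp_sub_one_sub_id_le hx)

lemma sum_bernoulliWeight_mul_exp_le {p : ℝ} (hp₀ : 0 ≤ p) (hp₁ : p ≤ 1) {c : ι → ℝ}
    (hc : ∀ i, |c i| ≤ 1) :
    ∑ ω, bernoulliWeight p ω * Real.exp (centeredSum p c ω)
      ≤ Real.exp (p * ∑ i, c i ^ 2) := by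
  simp_rw [centeredSum, Real.exp_sum, smul_eq_mul]
  rw [sum_bernoulliWeight_mul_prod p fun i b => Real.exp (((if b then 1 else 0) - p) * c i),
    mul_sum, Real.exp_sum]
  refine prod_le_prod (fun i _ => by positivity) fun i _ => ?_
  simpa [neg_mul] using centered_bernoulli_mgf_le hp₀ (hc i)

lemma sum_bernoulliWeight_filter_le_exp {p : ℝ} (hp₀ : 0 ≤ p) (hp₁ : p ≤ 1)
    {c : ι → ℝ} (hc : ∀ i, |c i| ≤ 1) {lam : ℝ} (hl₀ : 0 ≤ lam) (hl₁ : lam ≤ 1) (t : ℝ) :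
    ∑ ω with t ≤ centeredSum p c ω, bernoulliWeight p ω
      ≤ Real.exp (lam ^ 2 * p * Fintype.card ι - lam * t) := by
  have hlc : ∀ i, |(lam • c) i| ≤ 1 := fun i => by
    rw [Pi.smul_apply, smul_eq_mul, abs_mul, abs_of_nonneg hl₀]
    exact mul_le_one₀ hl₁ (abs_nonneg _) (hc i)
  have hsq : ∑ i, (lam • c) i ^ 2 ≤ lam ^ 2 * Fintype.card ι := by
    simp_rw [Pi.smul_apply, smul_eq_mul, mul_pow, ← mul_sum]
    gcongr
    simpa using sum_le_card_nsmul univ (fun i => c i ^ 2) 1 fun i _ => by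
      simpa [sq_abs] using pow_le_one₀ (abs_nonneg _) (hc i) (n := 2)
  calc ∑ ω with t ≤ centeredSum p c ω, bernoulliWeight p ω
      ≤ ∑ ω with t ≤ centeredSum p c ω,
          bernoulliWeight p ω * Real.exp (lam * (centeredSum p c ω - t)) := by
        refine sum_le_sum fun ω hω =>
          le_mul_of_one_le_right (bernoulliWeight_nonneg hp₀ hp₁ ω) (Real.one_le_exp ?_)
        exact mul_nonneg hl₀ (sub_nonneg.2 (mem_filter.1 hω).2)
    _ ≤ ∑ ω, bernoulliWeight p ω * Real.exp (lam * (centeredSum p c ω - t)) :=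
        sum_le_sum_of_subset_of_nonneg (filter_subset _ _) fun ω _ _ =>
          mul_nonneg (bernoulliWeight_nonneg hp₀ hp₁ ω) (Real.exp_pos _).le
    _ = Real.exp (-(lam * t))
          * ∑ ω, bernoulliWeight p ω * Real.exp (centeredSum p (lam • c) ω) := by
        rw [mul_sum]
        refine sum_congr rfl fun ω _ => ?_
        rw [centeredSum_smul, smul_eq_mul, mul_sub, Real.exp_sub, Real.exp_neg]
        ring
    _ ≤ Real.exp (-(lam * t)) * Real.exp (p * (lam ^ 2 * Fintype.card ι)) := by
        gcongr
        exact (sum_bernoulliWeight_mul_exp_le hp₀ hp₁ hlc).trans (by gcongr)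
    _ = Real.exp (lam ^ 2 * p * Fintype.card ι - lam * t) := by
        rw [← Real.exp_add]; ring_nf

lemma exists_forall_centeredSum_lt {α : Type*} [Fintype α] {p : ℝ} (hp₀ : 0 ≤ p)
    (hp₁ : p ≤ 1) {c : α → ι → ℝ} (hc : ∀ a i, |c a i| ≤ 1) {lam t : ℝ} (hl₀ : 0 ≤ lam)
    (hl₁ : lam ≤ 1)
    (h : Fintype.card α * Real.exp (lam ^ 2 * p * Fintype.card ι - lam * t) < 1) :
    ∃ ω, ∀ a, centeredSum p (c a) ω < t := by
  by_contra! hbad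
  have hcover : 1 ≤ ∑ a, ∑ ω with t ≤ centeredSum p (c a) ω, bernoulliWeight p ω :=
    calc 1 = ∑ ω, bernoulliWeight p ω := (sum_bernoulliWeight p).symm
      _ ≤ ∑ ω, ∑ a, if t ≤ centeredSum p (c a) ω then bernoulliWeight p ω else 0 := by
          refine sum_le_sum fun ω _ => ?_
          obtain ⟨a, ha⟩ := hbad ω
          have hnonneg (b : α) :
              0 ≤ if t ≤ centeredSum p (c b) ω then bernoulliWeight p ω else 0 := by
            split <;> simp [bernoulliWeight_nonneg hp₀ hp₁]
          simpa [ha] using single_le_sum (fun b _ => hnonneg b) (mem_univ a)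
      _ = ∑ a, ∑ ω with t ≤ centeredSum p (c a) ω, bernoulliWeight p ω := by
          rw [sum_comm]; simp_rw [sum_filter]
  have hbound := sum_le_sum fun a (_ : a ∈ univ) =>
    sum_bernoulliWeight_filter_le_exp hp₀ hp₁ (hc a) hl₀ hl₁ t
  rw [sum_const, card_univ, nsmul_eq_mul] at hbound
  linarith

lemma exists_forall_norm_centeredSum_lt {α : Type*} [Fintype α] {p : ℝ} (hp₀ : 0 ≤ p)
    (hp₁ : p ≤ 1) {v : α → ι → ℂ} (hv : ∀ a i, ‖v a i‖ ≤ 1) {lam t : ℝ} (hl₀ : 0 ≤ lam)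
    (hl₁ : lam ≤ 1)
    (h : 4 * Fintype.card α * Real.exp (lam ^ 2 * p * Fintype.card ι - lam * t) < 1) :
    ∃ ω, ∀ a, ‖centeredSum p (v a) ω‖ < 2 * t := by
  -- `Re (I ^ k * z)` for `k < 4` runs through `Re z, -Im z, -Re z, Im z`.
  have hc : ∀ (b : α × Fin 4) i, |(Complex.I ^ (b.2 : ℕ) * v b.1 i).re| ≤ 1 := fun b i =>
    (Complex.abs_re_le_norm _).trans (by simpa using hv b.1 i)
  obtain ⟨ω, hω⟩ := exists_forall_centeredSum_lt hp₀ hp₁ hc hl₀ hl₁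
    (by simpa [Fintype.card_prod, mul_comm] using h)
  refine ⟨ω, fun a => ?_⟩
  set Z := centeredSum p (v a) ω
  have hk (k : Fin 4) := re_I_pow_mul_centeredSum p (v a) ω k ▸ hω (a, k)
  have h0 : Z.re < t := by simpa using hk 0
  have h1 : -Z.im < t := by simpa [pow_succ] using hk 1
  have h2 : -Z.re < t := by simpa [pow_succ] using hk 2
  have h3 : Z.im < t := by simpa [pow_succ] using hk 3
  calc ‖Z‖ ≤ |Z.re| + |Z.im| := Complex.norm_le_abs_re_add_abs_im Z
    _ < t + t := add_lt_add (abs_lt.2 ⟨by linarith, h0⟩) (abs_lt.2 ⟨by linarith, h3⟩)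
    _ = 2 * t := (two_mul t).symm

end Bernoulli

lemma one_le_log_of_three_le {x : ℝ} (hx : 3 ≤ x) : 1 ≤ Real.log x := by
  rw [Real.le_log_iff_exp_le (by linarith)]
  linarith [Real.exp_one_lt_d9]

lemma exists_chernoff_exponent {x : ℝ} (hx : 3 ≤ x) :
    ∃ lam : ℝ, 0 ≤ lam ∧ lam ≤ 1 ∧
      4 * x * Real.exp (lam ^ 2 * (√x)⁻¹ * x - lam * (8 * √√x * √(Real.log x))) < 1 := by
  have hx₀ : 0 < x := by linarith
  have hs : √x ^ 2 = x := Real.sq_sqrt hx₀.le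
  have hs₀ : 0 < √x := Real.sqrt_pos.2 hx₀
  have hr : √√x ^ 2 = √x := Real.sq_sqrt hs₀.le
  have hr₀ : 0 < √√x := Real.sqrt_pos.2 hs₀
  have hlog₁ := one_le_log_of_three_le hx
  have hlog_le : Real.log x ≤ 2 * √x := by
    have := Real.log_le_sub_one_of_pos hs₀
    rw [Real.log_sqrt hx₀.le] at this
    linarith
  have hL : √(Real.log x) ^ 2 = Real.log x := Real.sq_sqrt (by linarith)
  refine ⟨√(Real.log x) / (2 * √√x), by positivity, ?_, ?_⟩
  · rw [div_le_one (by positivity)]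
    nlinarith
  · have hexponent : (√(Real.log x) / (2 * √√x)) ^ 2 * (√x)⁻¹ * x
        - √(Real.log x) / (2 * √√x) * (8 * √√x * √(Real.log x))
        = -(15 / 4 * Real.log x) := by
      field_simp
      rw [hL, hr]
      linear_combination (-4 * Real.log x) * hs
    have hcube : Real.exp (-(3 * Real.log x)) = (x ^ 3)⁻¹ := by
      rw [Real.exp_neg, show 3 * Real.log x = Real.log (x ^ 3) by simp [Real.log_pow],
        Real.exp_log (by positivity)]
    rw [hexponent]
    calc 4 * x * Real.exp (-(15 / 4 * Real.log x)) ≤ 4 * x * Real.exp (-(3 * Real.log x)) := by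
          gcongr; linarith
      _ = 4 / x ^ 2 := by rw [hcube]; field_simp
      _ < 1 := by rw [div_lt_one (by positivity)]; nlinarith

section FiniteField

variable {F : Type*} [Field F] [Fintype F]

lemma norm_gaussSum_eq_sqrt_card {χ : MulChar F ℂ} (hχ : χ ≠ 1) {ψ : AddChar F ℂ}
    (hψ : ψ.IsPrimitive) : ‖gaussSum χ ψ‖ = √(Fintype.card F) := by
  have h : ((‖gaussSum χ ψ‖ ^ 2 : ℝ) : ℂ) = Fintype.card F := by
    rw [Complex.ofReal_pow, ← Complex.mul_conj', starRingEnd_apply, star_gaussSum_eq,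
      gaussSum_mul_gaussSum_eq_card hχ hψ]
  rw [← Real.sqrt_sq (norm_nonneg _),
    show ‖gaussSum χ ψ‖ ^ 2 = Fintype.card F by exact_mod_cast h]

lemma inv_sqrt_card_le_one : (√(Fintype.card F))⁻¹ ≤ 1 :=
  inv_le_one_of_one_le₀ (Real.one_le_sqrt.2 (by exact_mod_cast Fintype.card_pos))

variable [DecidableEq F]

variable (F) in
noncomputable def complexQuadraticChar : MulChar F ℂ :=
  (quadraticChar F).ringHomComp (Int.castRingHom ℂ)

lemma complexQuadraticChar_ne_one (hF : ringChar F ≠ 2) : complexQuadraticChar F ≠ 1 :=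
  (MulChar.ringHomComp_ne_one_iff (RingHom.injective_int _)).2 (quadraticChar_ne_one hF)

noncomputable def signVector (ω : F → Bool) (k : F) : ℝ :=
  if IsSquare k ∨ ω k then 1 else -1

lemma signVector_eq_one_or_neg_one (ω : F → Bool) (k : F) :
    signVector ω k = 1 ∨ signVector ω k = -1 := by
  unfold signVector; split <;> simp

lemma signVector_eq (p : ℝ) (ω : F → Bool) (k : F) :
    (signVector ω k : ℂ) = p + (1 - p) * (complexQuadraticChar F k + if k = 0 then 1 else 0)
      + 2 * ((if IsSquare k then 0 else (if ω k then 1 else 0) - p : ℝ) : ℂ) := by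
  rcases eq_or_ne k 0 with rfl | hk
  · simp [signVector, complexQuadraticChar]
  by_cases hsq : IsSquare k
  · simp [signVector, complexQuadraticChar, hsq, hk, (quadraticChar_one_iff_isSquare hk).2 hsq]
  · have := quadraticChar_neg_one_iff_not_isSquare.2 hsq
    cases hω : ω k <;> simp [signVector, complexQuadraticChar, hsq, hk, this, hω] <;> ring

variable {ψ : AddChar F ℂ}

variable (ψ) in
noncomputable def nonsquareWave (j k : F) : ℂ :=
  if IsSquare k then 0 else ψ (j * k)

variable (ψ) in
noncomputable def fourierMainTerm (p : ℝ) (j : F) : ℂ :=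
  p * ((if j = 0 then Fintype.card F else 0 : ℕ) : ℂ)
    + (1 - p) * gaussSum (complexQuadraticChar F) (ψ.mulShift j)

lemma sum_signVector_mul (hψ : ψ.IsPrimitive) (p : ℝ) (ω : F → Bool) (j : F) :
    ∑ k, (signVector ω k : ℂ) * ψ (j * k)
      = fourierMainTerm ψ p j + (1 - p) + 2 * centeredSum p (nonsquareWave ψ j) ω := by
  have hconst : ∑ k, ψ (j * k) = ((if j = 0 then Fintype.card F else 0 : ℕ) : ℂ) := by
    simp_rw [mul_comm j, AddChar.sum_mulShift j hψ]
  have hchar : ∑ k, (complexQuadraticChar F k + if k = 0 then 1 else 0) * ψ (j * k)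
      = gaussSum (complexQuadraticChar F) (ψ.mulShift j) + 1 := by
    simp only [gaussSum, AddChar.mulShift_apply, add_mul, sum_add_distrib]
    simp [mul_comm]
  have hnoise :
      ∑ k, ((if IsSquare k then 0 else (if ω k then 1 else 0) - p : ℝ) : ℂ) * ψ (j * k)
        = centeredSum p (nonsquareWave ψ j) ω := by
    simp only [centeredSum, nonsquareWave, smul_ite, smul_zero, Complex.real_smul]
    exact sum_congr rfl fun k _ => by split_ifs <;> simp
  simp_rw [signVector_eq p, add_mul, sum_add_distrib, mul_assoc, ← mul_sum]
  rw [hconst, hchar, hnoise, fourierMainTerm]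
  ring

lemma abs_norm_fourierMainTerm_sub_sqrt_le_one (hF : ringChar F ≠ 2) (hψ : ψ.IsPrimitive)
    (j : F) :
    |‖fourierMainTerm ψ (√(Fintype.card F))⁻¹ j‖ - √(Fintype.card F)| ≤ 1 := by
  rw [fourierMainTerm]
  rcases eq_or_ne j 0 with rfl | hj
  · rw [AddChar.mulShift_zero, gaussSum_one_right (complexQuadraticChar_ne_one hF), if_pos rfl,
      mul_zero, add_zero, ← Complex.ofReal_natCast, ← Complex.ofReal_mul, inv_mul_eq_div,
      Real.div_sqrt, Complex.norm_real, Real.norm_of_nonneg (Real.sqrt_nonneg _), sub_self,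
      abs_zero]
    exact zero_le_one
  · have hG := norm_gaussSum_eq_sqrt_card (complexQuadraticChar_ne_one hF)
      (AddChar.IsPrimitive.of_ne_one (hψ hj))
    rw [if_neg hj, Nat.cast_zero, mul_zero, zero_add, norm_mul, hG, ← Complex.ofReal_one,
      ← Complex.ofReal_sub, Complex.norm_real,
      Real.norm_of_nonneg (sub_nonneg.2 inv_sqrt_card_le_one), sub_mul,
      inv_mul_cancel₀ (Real.sqrt_pos.2 (by exact_mod_cast Fintype.card_pos)).ne']
    simp

lemma abs_norm_sum_signVector_mul_sub_sqrt_le (hF : ringChar F ≠ 2) (hψ : ψ.IsPrimitive)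
    (ω : F → Bool) (j : F) :
    |‖∑ k, (signVector ω k : ℂ) * ψ (j * k)‖ - √(Fintype.card F)|
      ≤ 2 + 2 * ‖centeredSum (√(Fintype.card F))⁻¹ (nonsquareWave ψ j) ω‖ := by
  set p := (√(Fintype.card F))⁻¹
  set M := fourierMainTerm ψ p j
  set Z := centeredSum p (nonsquareWave ψ j) ω
  have herr : ‖(1 - p : ℂ) + 2 * Z‖ ≤ 1 + 2 * ‖Z‖ := by
    refine (norm_add_le _ _).trans (add_le_add ?_ (by simp))
    rw [← Complex.ofReal_one, ← Complex.ofReal_sub, Complex.norm_real,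
      Real.norm_of_nonneg (sub_nonneg.2 inv_sqrt_card_le_one)]
    linarith [show 0 ≤ p by positivity]
  rw [sum_signVector_mul hψ p, add_assoc]
  calc |‖M + ((1 - p) + 2 * Z)‖ - √(Fintype.card F)|
      ≤ |‖M + ((1 - p) + 2 * Z)‖ - ‖M‖| + |‖M‖ - √(Fintype.card F)| :=
        abs_sub_le _ _ _
    _ ≤ (1 + 2 * ‖Z‖) + 1 :=
      add_le_add ((abs_norm_sub_norm_le _ _).trans (by simpa using herr))
        (abs_norm_fourierMainTerm_sub_sqrt_le_one hF hψ j)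
    _ = 2 + 2 * ‖Z‖ := by ring

theorem exists_signVector_abs_norm_fourier_sub_sqrt_le (hF : ringChar F ≠ 2)
    (hψ : ψ.IsPrimitive) (hcard : 3 ≤ Fintype.card F) :
    ∃ ω : F → Bool, ∀ j,
      |‖∑ k, (signVector ω k : ℂ) * ψ (j * k)‖ - √(Fintype.card F)|
        ≤ 34 * √√(Fintype.card F) * √(Real.log (Fintype.card F)) := by
  have hn : (3 : ℝ) ≤ Fintype.card F := by exact_mod_cast hcard
  obtain ⟨lam, hl₀, hl₁, hlam⟩ := exists_chernoff_exponent hn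
  have hv (j k : F) : ‖nonsquareWave ψ j k‖ ≤ 1 := by
    unfold nonsquareWave; split <;> simp [AddChar.norm_apply]
  obtain ⟨ω, hω⟩ :=
    exists_forall_norm_centeredSum_lt (by positivity) inv_sqrt_card_le_one hv hl₀ hl₁
    (by simpa only [mul_assoc] using hlam)
  have hrL : 1 ≤ √√(Fintype.card F) * √(Real.log (Fintype.card F)) :=
    one_le_mul_of_one_le_of_one_le (Real.one_le_sqrt.2 (Real.one_le_sqrt.2 (by linarith)))
      (Real.one_le_sqrt.2 (one_le_log_of_three_le hn))
  refine ⟨ω, fun j => (abs_norm_sum_signVector_mul_sub_sqrt_le hF hψ ω j).trans ?_⟩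
  linarith [hω j]

end FiniteField

/-- **Lemma 2.3.** There is an absolute constant `C > 0` such that for every odd prime `q`
there is a vector `u ∈ {-1,1}^{ℤ_q}` all of whose Fourier coefficients
`û(j) = ∑_{k ∈ ℤ_q} u(k) e^{2πi jk/q}` satisfy `| |û(j)| - √q | ≤ √q δ_q`,
with `δ_q = C q^{-1/4} √(log q)`. -/
theorem flat_fourier_sign_vector_exists :
    ∃ C : ℝ, 0 < C ∧
      ∀ (q : ℕ) [Fact q.Prime], Odd q →
        ∃ u : ZMod q → ℝ, (∀ k, u k = 1 ∨ u k = -1) ∧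
          ∀ j : ZMod q,
            |‖∑ k : ZMod q, (u k : ℂ) *
                Complex.exp (2 * π * Complex.I * (((j * k).val : ℕ) : ℂ) / q)‖
              - Real.sqrt q|
            ≤ Real.sqrt q * (C * (q : ℝ) ^ (-(1 / 4 : ℝ)) * Real.sqrt (Real.log q)) := by
  refine ⟨34, by norm_num, fun q _ hq => ?_⟩
  have hq₂ : q ≠ 2 := by rintro rfl; exact (by decide : ¬Odd 2) hq
  have hF : ringChar (ZMod q) ≠ 2 := by rwa [ZMod.ringChar_zmod_n]
  have hcard : 3 ≤ Fintype.card (ZMod q) := by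
    rw [ZMod.card]; have := (Fact.out : q.Prime).two_le; omega
  obtain ⟨ω, hω⟩ :=
    exists_signVector_abs_norm_fourier_sub_sqrt_le hF (ZMod.isPrimitive_stdAddChar q) hcard
  refine ⟨signVector ω, signVector_eq_one_or_neg_one ω, fun j => ?_⟩
  have hexp (k : ZMod q) : Complex.exp (2 * π * Complex.I * (((j * k).val : ℕ) : ℂ) / q)
      = ZMod.stdAddChar (j * k) := by
    rw [ZMod.stdAddChar_apply, ZMod.toCircle_apply]
  have hquarter : √(q : ℝ) * (q : ℝ) ^ (-(1 / 4 : ℝ)) = √√(q : ℝ) := by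
    have hq₀ : (0 : ℝ) < q := by exact_mod_cast (Fact.out : q.Prime).pos
    simp only [Real.sqrt_eq_rpow]
    rw [← Real.rpow_add hq₀, ← Real.rpow_mul hq₀.le]
    norm_num
  simp_rw [hexp]
  calc _ ≤ 34 * √√(q : ℝ) * √(Real.log q) := by simpa only [ZMod.card] using hω j
    _ = _ := by rw [← hquarter]; ring
end

section
/- For all constants 0 < c₀ ≤ C₀ there exist δ ∈ (0, 1) and c > 0 with the following property. Let n ∈ ℕ and let V be an n × n matrix with entries ±1 such that c₀√n ≤ s_min(V) ≤ s_max(V) ≤ C₀√n. Then any n × n random matrix Y with i.i.d. entries Y_{i,j} satisfying E Y_{i,j} = 0 and |Y_{i,j}| ≤ δ almost surely obeys P( κ(V + Y) ≤ 4·C₀/c₀ ) ≥ 1 − exp(−cn). -/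
open MeasureTheory ProbabilityTheory Matrix
open scoped ENNReal

/-- The largest singular value of an `n × N` real matrix, i.e. the operator norm of the
induced linear map between Euclidean spaces. -/
noncomputable def sMax {n N : ℕ} (A : Matrix (Fin n) (Fin N) ℝ) : ℝ :=
  ‖LinearMap.toContinuousLinearMap (Matrix.toEuclideanLin A)‖

/-- The smallest singular value of an `n × N` real matrix (`n ≤ N`), i.e.
`√λ_min(AAᵀ) = min_{‖x‖₂ = 1} ‖Aᵀ x‖₂`. -/
noncomputable def sMin {n N : ℕ} (A : Matrix (Fin n) (Fin N) ℝ) : ℝ :=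
  ⨅ x : {x : EuclideanSpace ℝ (Fin n) // ‖x‖ = 1},
    ‖Matrix.toEuclideanLin Aᵀ (x : EuclideanSpace ℝ (Fin n))‖

/-- The condition number `κ(A) = s_max(A)/s_min(A)`, with the convention `κ(A) = ∞`
whenever `s_min(A) = 0`. -/
noncomputable def condNumber {n N : ℕ} (A : Matrix (Fin n) (Fin N) ℝ) : ℝ≥0∞ :=
  if sMin A = 0 then ⊤ else ENNReal.ofReal (sMax A / sMin A)

open Metric Real Finset
open scoped RealInnerProductSpace NNReal

/-!
By Weyl's inequalities `s_min(V + Y) ≥ s_min(V) - ‖Y‖` and `s_max(V + Y) ≤ s_max(V) + ‖Y‖`, it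
suffices that `‖Y‖ ≤ s_min(V)/2`, which gives `κ(V + Y) ≤ 3 κ(V) ≤ 3 C₀/c₀`. For fixed unit vectors
`x, y` the form `⟪Y x, y⟫ = ∑ yᵢ xⱼ Yᵢⱼ` is a sum of independent centred variables bounded by
`|yᵢ xⱼ| δ`, hence sub-Gaussian with variance proxy `δ²` by Hoeffding's lemma. A volume argument
gives a `1/4`-net of the unit sphere with at most `9ⁿ` points, and controlling `⟪Y x, y⟫` on pairs
from the net controls `‖Y‖` up to a factor `2`; the union bound over the `81ⁿ` pairs leaves an
exceptional event of probability at most `81ⁿ exp(-c₀² n / (32 δ²)) ≤ exp(-32 n)` once `δ ≤ c₀/40`.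
-/

theorem Finset.card_le_of_pairwise_lt_dist_of_subset_closedBall {E : Type*}
    [NormedAddCommGroup E] [NormedSpace ℝ E] [FiniteDimensional ℝ E] {r : ℝ} (hr : 0 < r)
    (F : Finset E) (hF : ↑F ⊆ closedBall (0 : E) 1)
    (hsep : (F : Set E).Pairwise fun x y ↦ r < dist x y) :
    (#F : ℝ) ≤ (1 + 2 / r) ^ Module.finrank ℝ E := by
  borelize E
  set μ : Measure E := Measure.addHaar
  set d := Module.finrank ℝ E
  have hdisj : (F : Set E).PairwiseDisjoint fun x ↦ ball x (r / 2) :=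
    fun x hx y hy hxy ↦ ball_disjoint_ball (by linarith [hsep hx hy hxy])
  have hsub : (⋃ x ∈ F, ball x (r / 2)) ⊆ ball (0 : E) (1 + r / 2) := by
    refine Set.iUnion₂_subset fun x hx ↦ ball_subset_ball' ?_
    have := mem_closedBall_zero_iff.1 (hF hx)
    rw [dist_zero_right]; linarith
  have hvol : (#F : ℝ≥0∞) * ENNReal.ofReal ((r / 2) ^ d) * μ (ball 0 1)
      ≤ ENNReal.ofReal ((1 + r / 2) ^ d) * μ (ball 0 1) := by
    calc (#F : ℝ≥0∞) * ENNReal.ofReal ((r / 2) ^ d) * μ (ball 0 1)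
        = μ (⋃ x ∈ F, ball x (r / 2)) := by
          rw [measure_biUnion_finset hdisj fun x _ ↦ measurableSet_ball, mul_assoc,
            ← nsmul_eq_mul, ← Finset.sum_const]
          exact Finset.sum_congr rfl fun x _ ↦
            (Measure.addHaar_ball_of_pos μ x (by positivity)).symm
      _ ≤ μ (ball 0 (1 + r / 2)) := measure_mono hsub
      _ = _ := Measure.addHaar_ball_of_pos μ 0 (by positivity)
  have hball : μ (ball (0 : E) 1) ≠ 0 := (measure_ball_pos μ 0 one_pos).ne'
  rw [ENNReal.mul_le_mul_iff_left hball measure_ball_lt_top.ne, ← ENNReal.ofReal_natCast,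
    ← ENNReal.ofReal_mul (by positivity), ENNReal.ofReal_le_ofReal_iff (by positivity)] at hvol
  calc (#F : ℝ) = F.card * (r / 2) ^ d / (r / 2) ^ d := by field_simp
    _ ≤ (1 + r / 2) ^ d / (r / 2) ^ d := by gcongr
    _ = (1 + 2 / r) ^ d := by rw [← div_pow]; congr 1; field_simp; ring

lemma Set.encard_le_of_forall_finset_card_le {α : Type*} {s : Set α} {k : ℕ}
    (h : ∀ F : Finset α, ↑F ⊆ s → #F ≤ k) : s.encard ≤ k := by
  by_contra! hlt
  obtain ⟨t, hts, ht⟩ := Set.exists_subset_encard_eq (Order.add_one_le_of_lt hlt)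
  have htfin : t.Finite := Set.finite_of_encard_eq_coe ht
  have := h htfin.toFinset (by simpa using hts)
  rw [htfin.encard_eq_coe_toFinset_card] at ht
  norm_cast at ht
  omega

lemma Metric.isSeparated_iff_pairwise_lt_dist {E : Type*} [PseudoMetricSpace E] {ε : ℝ≥0}
    {s : Set E} :
    IsSeparated ε s ↔ s.Pairwise fun x y ↦ (ε : ℝ) < dist x y := by
  simp only [IsSeparated, edist_nndist, ENNReal.coe_lt_coe, ← NNReal.coe_lt_coe, coe_nndist]

theorem exists_finset_net_sphere {E : Type*} [NormedAddCommGroup E] [NormedSpace ℝ E]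
    [FiniteDimensional ℝ E] {ε : ℝ≥0} (hε : 0 < ε) :
    ∃ N : Finset E, ↑N ⊆ sphere (0 : E) 1 ∧ (∀ x ∈ sphere (0 : E) 1, ∃ y ∈ N, dist x y ≤ ε) ∧
      (#N : ℝ) ≤ (1 + 2 / ε) ^ Module.finrank ℝ E := by
  set B := (1 + 2 / (ε : ℝ)) ^ Module.finrank ℝ E
  have hsep_card : ∀ F : Finset E, ↑F ⊆ sphere (0 : E) 1 → IsSeparated ε (F : Set E) →
      (#F : ℝ) ≤ B := fun F hF hsep ↦
    F.card_le_of_pairwise_lt_dist_of_subset_closedBall hε (hF.trans sphere_subset_closedBall)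
      (isSeparated_iff_pairwise_lt_dist.1 hsep)
  have hpack : packingNumber ε (sphere (0 : E) 1) ≠ ⊤ :=
    ne_top_of_le_ne_top (ENat.natCast_ne_top ⌊B⌋₊) <| iSup₂_le fun C hC ↦ iSup_le fun hsep ↦
      Set.encard_le_of_forall_finset_card_le fun F hF ↦
        Nat.le_floor (hsep_card F (hF.trans hC) (hsep.subset hF))
  have hfin : (maximalSeparatedSet ε (sphere (0 : E) 1)).Finite :=
    Set.encard_ne_top_iff.1 (by rwa [encard_maximalSeparatedSet hpack])
  refine ⟨hfin.toFinset, by simpa using maximalSeparatedSet_subset, fun x hx ↦ ?_, ?_⟩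
  · obtain ⟨y, hy, hxy⟩ : ∃ y ∈ maximalSeparatedSet ε (sphere (0 : E) 1), edist x y ≤ ε :=
      isCover_maximalSeparatedSet hpack hx
    exact ⟨y, hfin.mem_toFinset.2 hy, dist_le_coe.2 (edist_le_coe.1 hxy)⟩
  · exact hsep_card _ (by simpa using maximalSeparatedSet_subset)
      (by simpa using isSeparated_maximalSeparatedSet)

lemma EuclideanSpace.exists_finset_quarter_net_sphere (m : ℕ) :
    ∃ N : Finset (EuclideanSpace ℝ (Fin m)), (N : Set (EuclideanSpace ℝ (Fin m))) ⊆ sphere 0 1 ∧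
      (∀ x ∈ sphere (0 : EuclideanSpace ℝ (Fin m)) 1, ∃ y ∈ N, dist x y ≤ 1 / 4) ∧
      (#N : ℝ) ≤ 9 ^ m := by
  obtain ⟨N, hN, hnet, hcard⟩ := exists_finset_net_sphere (E := EuclideanSpace ℝ (Fin m))
    (ε := 1 / 4) (by norm_num)
  refine ⟨N, hN, by simpa using hnet, ?_⟩
  norm_num [finrank_euclideanSpace_fin] at hcard
  exact hcard

lemma ContinuousLinearMap.real_inner_le_add_of_net {E F : Type*} [NormedAddCommGroup E]
    [InnerProductSpace ℝ E] [NormedAddCommGroup F] [InnerProductSpace ℝ F] (T : E →L[ℝ] F) {ε K : ℝ}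
    {N : Set E} {M : Set F} (hN : N ⊆ closedBall 0 1)
    (hNnet : ∀ x ∈ sphere (0 : E) 1, ∃ x₀ ∈ N, dist x x₀ ≤ ε)
    (hMnet : ∀ y ∈ sphere (0 : F) 1, ∃ y₀ ∈ M, dist y y₀ ≤ ε)
    (h : ∀ x ∈ N, ∀ y ∈ M, ⟪T x, y⟫ ≤ K) {x : E} {y : F} (hx : ‖x‖ = 1) (hy : ‖y‖ = 1) :
    ⟪T x, y⟫ ≤ K + 2 * ε * ‖T‖ := by
  obtain ⟨x₀, hx₀N, hxx₀⟩ := hNnet x (mem_sphere_zero_iff_norm.2 hx)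
  obtain ⟨y₀, hy₀M, hyy₀⟩ := hMnet y (mem_sphere_zero_iff_norm.2 hy)
  rw [dist_eq_norm] at hxx₀ hyy₀
  have hx₀ : ‖x₀‖ ≤ 1 := mem_closedBall_zero_iff.1 (hN hx₀N)
  have h₁ : ⟪T (x - x₀), y⟫ ≤ ε * ‖T‖ :=
    calc ⟪T (x - x₀), y⟫ ≤ ‖T (x - x₀)‖ * ‖y‖ := real_inner_le_norm _ _
      _ ≤ ‖T‖ * ‖x - x₀‖ := by rw [hy, mul_one]; exact T.le_opNorm _
      _ ≤ ε * ‖T‖ := by rw [mul_comm]; gcongr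
  have h₂ : ⟪T x₀, y - y₀⟫ ≤ ε * ‖T‖ :=
    calc ⟪T x₀, y - y₀⟫ ≤ ‖T x₀‖ * ‖y - y₀‖ := real_inner_le_norm _ _
      _ ≤ ‖T‖ * ε := by
          gcongr
          exact (T.le_opNorm x₀).trans (mul_le_of_le_one_right (norm_nonneg T) hx₀)
      _ = ε * ‖T‖ := mul_comm _ _
  have hsplit : ⟪T x, y⟫ = ⟪T x₀, y₀⟫ + ⟪T (x - x₀), y⟫ + ⟪T x₀, y - y₀⟫ := by
    rw [map_sub, inner_sub_left, inner_sub_right]; ring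
  linarith [h x₀ hx₀N y₀ hy₀M]

theorem ContinuousLinearMap.one_sub_two_mul_mul_opNorm_le_of_net {E F : Type*}
    [NormedAddCommGroup E] [InnerProductSpace ℝ E] [NormedAddCommGroup F]
    [InnerProductSpace ℝ F] (T : E →L[ℝ] F) {ε K : ℝ} (hε : 0 ≤ ε) (hK : 0 ≤ K)
    {N : Set E} {M : Set F} (hN : N ⊆ closedBall 0 1)
    (hNnet : ∀ x ∈ sphere (0 : E) 1, ∃ x₀ ∈ N, dist x x₀ ≤ ε)
    (hMnet : ∀ y ∈ sphere (0 : F) 1, ∃ y₀ ∈ M, dist y y₀ ≤ ε)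
    (h : ∀ x ∈ N, ∀ y ∈ M, ⟪T x, y⟫ ≤ K) :
    (1 - 2 * ε) * ‖T‖ ≤ K := by
  suffices ‖T‖ ≤ K + 2 * ε * ‖T‖ by linarith
  refine T.opNorm_le_of_unit_norm (by positivity) fun x hx ↦ ?_
  rcases eq_or_ne (T x) 0 with hTx | hTx
  · rw [hTx, norm_zero]; positivity
  have hunit : ‖‖T x‖⁻¹ • T x‖ = 1 := by
    rw [norm_smul, norm_inv, norm_norm, inv_mul_cancel₀ (norm_ne_zero_iff.2 hTx)]
  have := T.real_inner_le_add_of_net hN hNnet hMnet h hx hunit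
  rwa [real_inner_smul_right, real_inner_self_eq_norm_sq, sq, inv_mul_cancel_left₀
    (norm_ne_zero_iff.2 hTx)] at this

section SingularValues

variable {n m : ℕ}

lemma sMax_nonneg (A : Matrix (Fin n) (Fin m) ℝ) : 0 ≤ sMax A := norm_nonneg _

lemma sMax_transpose (A : Matrix (Fin n) (Fin m) ℝ) : sMax Aᵀ = sMax A := by
  rw [sMax, sMax, ← conjTranspose_eq_transpose_of_trivial, toEuclideanLin_conjTranspose_eq_adjoint,
    LinearMap.adjoint_toContinuousLinearMap, LinearIsometryEquiv.norm_map]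

lemma norm_toEuclideanLin_le_sMax (A : Matrix (Fin n) (Fin m) ℝ) (x : EuclideanSpace ℝ (Fin m)) :
    ‖toEuclideanLin A x‖ ≤ sMax A * ‖x‖ :=
  (LinearMap.toContinuousLinearMap (toEuclideanLin A)).le_opNorm x

lemma sMax_add_le (A B : Matrix (Fin n) (Fin m) ℝ) : sMax (A + B) ≤ sMax A + sMax B := by
  simp only [sMax, map_add]
  exact norm_add_le _ _

lemma sMin_le_norm_toEuclideanLin_transpose (A : Matrix (Fin n) (Fin m) ℝ)
    {x : EuclideanSpace ℝ (Fin n)} (hx : ‖x‖ = 1) : sMin A ≤ ‖toEuclideanLin Aᵀ x‖ :=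
  ciInf_le (f := fun x : {x : EuclideanSpace ℝ (Fin n) // ‖x‖ = 1} ↦ ‖toEuclideanLin Aᵀ x‖)
    ⟨0, by rintro _ ⟨_, rfl⟩; exact norm_nonneg _⟩ ⟨x, hx⟩

lemma sMin_le_sMax (A : Matrix (Fin n) (Fin m) ℝ) : sMin A ≤ sMax A := by
  rcases isEmpty_or_nonempty {x : EuclideanSpace ℝ (Fin n) // ‖x‖ = 1} with h | ⟨x, hx⟩
  · rw [sMin, Real.iInf_of_isEmpty]; exact norm_nonneg _
  · calc sMin A ≤ ‖toEuclideanLin Aᵀ x‖ := sMin_le_norm_toEuclideanLin_transpose A hx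
      _ ≤ sMax Aᵀ * ‖x‖ := norm_toEuclideanLin_le_sMax _ _
      _ = sMax A := by rw [sMax_transpose, hx, mul_one]

lemma sMin_sub_sMax_le_sMin_add (A B : Matrix (Fin n) (Fin m) ℝ) :
    sMin A - sMax B ≤ sMin (A + B) := by
  rcases isEmpty_or_nonempty {x : EuclideanSpace ℝ (Fin n) // ‖x‖ = 1} with h | h
  · rw [sMin, sMin, Real.iInf_of_isEmpty, Real.iInf_of_isEmpty, zero_sub, neg_nonpos]
    exact norm_nonneg _
  refine le_ciInf fun ⟨x, hx⟩ ↦ ?_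
  have hB : ‖toEuclideanLin Bᵀ x‖ ≤ sMax B := by
    simpa [sMax_transpose, hx] using norm_toEuclideanLin_le_sMax Bᵀ x
  have hA := sMin_le_norm_toEuclideanLin_transpose A hx
  have := norm_sub_le (toEuclideanLin Aᵀ x + toEuclideanLin Bᵀ x) (toEuclideanLin Bᵀ x)
  rw [add_sub_cancel_right] at this
  show sMin A - sMax B ≤ ‖toEuclideanLin (A + B)ᵀ x‖
  rw [transpose_add, map_add, LinearMap.add_apply]
  linarith

lemma condNumber_add_le {A B : Matrix (Fin n) (Fin m) ℝ} (hA : 0 < sMin A)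
    (hB : sMax B ≤ sMin A / 2) : condNumber (A + B) ≤ ENNReal.ofReal (3 * (sMax A / sMin A)) := by
  have hmin : sMin A / 2 ≤ sMin (A + B) := by linarith [sMin_sub_sMax_le_sMin_add A B]
  have hmax : sMax (A + B) ≤ sMax A + sMin A / 2 := by linarith [sMax_add_le A B]
  have hminpos : 0 < sMin (A + B) := by linarith
  rw [condNumber, if_neg hminpos.ne']
  refine ENNReal.ofReal_le_ofReal ?_
  calc sMax (A + B) / sMin (A + B) ≤ (sMax A + sMin A / 2) / (sMin A / 2) := by
        gcongr; linarith [sMin_le_sMax A]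
    _ = 2 * (sMax A / sMin A) + 1 := by field_simp
    _ ≤ 3 * (sMax A / sMin A) := by linarith [(one_le_div hA).2 (sMin_le_sMax A)]

lemma inner_toEuclideanLin_eq_sum (A : Matrix (Fin n) (Fin m) ℝ) (x : EuclideanSpace ℝ (Fin m))
    (y : EuclideanSpace ℝ (Fin n)) :
    ⟪toEuclideanLin A x, y⟫ = ∑ p : Fin n × Fin m, y p.1 * x p.2 * A p.1 p.2 := by
  simp [PiLp.inner_apply, Fintype.sum_prod_type, Matrix.mulVec, dotProduct, Finset.mul_sum,
    mul_comm, mul_assoc, toEuclideanLin]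

lemma sum_sq_mul_eq_norm_sq_mul_norm_sq (x : EuclideanSpace ℝ (Fin m))
    (y : EuclideanSpace ℝ (Fin n)) :
    ∑ p : Fin n × Fin m, (y p.1 * x p.2) ^ 2 = ‖y‖ ^ 2 * ‖x‖ ^ 2 := by
  simp only [EuclideanSpace.real_norm_sq_eq, Fintype.sum_prod_type, mul_pow, Finset.sum_mul_sum]

end SingularValues

lemma MeasureTheory.one_sub_le_prob_compl {α : Type*} [MeasurableSpace α] {μ : Measure α}
    [IsProbabilityMeasure μ] (s : Set α) : 1 - μ s ≤ μ sᶜ :=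
  tsub_le_iff_left.2 (measure_univ (μ := μ) ▸ measure_univ_le_add_compl s)

lemma ProbabilityTheory.hasSubgaussianMGF_of_abs_le {Ω : Type*} [MeasurableSpace Ω]
    {μ : Measure Ω} [IsProbabilityMeasure μ] {X : Ω → ℝ} {δ : ℝ} (hX : AEMeasurable X μ)
    (hb : ∀ᵐ ω ∂μ, |X ω| ≤ δ) (h0 : μ[X] = 0) : HasSubgaussianMGF X (‖δ‖₊ ^ 2) μ := by
  have h := hasSubgaussianMGF_of_mem_Icc_of_integral_eq_zero hX
    (hb.mono fun ω hω ↦ Set.mem_Icc.2 (abs_le.1 hω)) h0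
  rwa [sub_neg_eq_add, ← two_mul, nnnorm_mul, Real.nnnorm_two,
    mul_div_cancel_left₀ _ two_ne_zero] at h

section RandomMatrix

variable {n m : ℕ} {Ω : Type*} [MeasurableSpace Ω] {μ : Measure Ω} [IsProbabilityMeasure μ]
  {Y : Ω → Matrix (Fin n) (Fin m) ℝ} {c : ℝ≥0}

lemma measure_le_inner_toEuclideanLin_le
    (h_indep : iIndepFun (fun (p : Fin n × Fin m) ω ↦ Y ω p.1 p.2) μ)
    (h_subG : ∀ i j, HasSubgaussianMGF (fun ω ↦ Y ω i j) c μ)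
    {x : EuclideanSpace ℝ (Fin m)} {y : EuclideanSpace ℝ (Fin n)} (hx : ‖x‖ = 1) (hy : ‖y‖ = 1)
    {ε : ℝ} (hε : 0 ≤ ε) :
    μ {ω | ε ≤ ⟪toEuclideanLin (Y ω) x, y⟫} ≤ ENNReal.ofReal (exp (-ε ^ 2 / (2 * c))) := by
  set a : Fin n × Fin m → ℝ := fun p ↦ y p.1 * x p.2
  have h_sum := HasSubgaussianMGF.sum_of_iIndepFun (s := Finset.univ)
    (h_indep.comp (fun p z ↦ a p * z) fun p ↦ measurable_const_mul (a p))
    fun p _ ↦ (h_subG p.1 p.2).const_mul (a p)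
  have hc : ∑ p, (⟨a p ^ 2, sq_nonneg _⟩ * c : ℝ≥0) = c := by
    ext
    rw [NNReal.coe_sum]
    change ∑ p, a p ^ 2 * (c : ℝ) = c
    rw [← Finset.sum_mul, sum_sq_mul_eq_norm_sq_mul_norm_sq, hx, hy]
    ring
  rw [hc] at h_sum
  simp_rw [inner_toEuclideanLin_eq_sum]
  rw [← ofReal_measureReal]
  exact ENNReal.ofReal_le_ofReal (h_sum.measure_ge_le hε)

lemma measure_lt_sMax_le
    (h_indep : iIndepFun (fun (p : Fin n × Fin m) ω ↦ Y ω p.1 p.2) μ)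
    (h_subG : ∀ i j, HasSubgaussianMGF (fun ω ↦ Y ω i j) c μ) {ε : ℝ} (hε : 0 ≤ ε) :
    μ {ω | 2 * ε < sMax (Y ω)} ≤ ENNReal.ofReal (9 ^ (m + n) * exp (-ε ^ 2 / (2 * c))) := by
  obtain ⟨N, hN, hNnet, hNcard⟩ := EuclideanSpace.exists_finset_quarter_net_sphere m
  obtain ⟨M, hM, hMnet, hMcard⟩ := EuclideanSpace.exists_finset_quarter_net_sphere n
  have hsub : {ω | 2 * ε < sMax (Y ω)} ⊆
      ⋃ p ∈ N ×ˢ M, {ω | ε ≤ ⟪toEuclideanLin (Y ω) p.1, p.2⟫} := by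
    intro ω (hω : 2 * ε < sMax (Y ω))
    by_contra hnot
    simp only [Set.mem_iUnion, Set.mem_ofPred_eq, Finset.mem_product, not_exists, not_le] at hnot
    have := ContinuousLinearMap.one_sub_two_mul_mul_opNorm_le_of_net
      (LinearMap.toContinuousLinearMap (toEuclideanLin (Y ω))) (by norm_num) hε
      (hN.trans sphere_subset_closedBall) hNnet hMnet fun x hx y hy ↦ (hnot (x, y) ⟨hx, hy⟩).le
    rw [sMax] at hω
    linarith
  calc μ {ω | 2 * ε < sMax (Y ω)}
      ≤ ∑ p ∈ N ×ˢ M, μ {ω | ε ≤ ⟪toEuclideanLin (Y ω) p.1, p.2⟫} :=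
        (measure_mono hsub).trans (measure_biUnion_finset_le _ _)
    _ ≤ ∑ _p ∈ N ×ˢ M, ENNReal.ofReal (exp (-ε ^ 2 / (2 * c))) := by
        refine Finset.sum_le_sum fun p hp ↦ ?_
        obtain ⟨hp₁, hp₂⟩ := Finset.mem_product.1 hp
        exact measure_le_inner_toEuclideanLin_le h_indep h_subG
          (mem_sphere_zero_iff_norm.1 (hN hp₁)) (mem_sphere_zero_iff_norm.1 (hM hp₂)) hε
    _ = ENNReal.ofReal (#N * #M * exp (-ε ^ 2 / (2 * c))) := by
        rw [Finset.sum_const, card_product, nsmul_eq_mul, ENNReal.ofReal_mul (by positivity)]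
        norm_cast
    _ ≤ _ := by
        gcongr
        rw [pow_add]
        gcongr

end RandomMatrix

lemma nine_pow_mul_exp_le {c₀ δ : ℝ} (hδ : 0 < δ) (hδc : δ ≤ c₀ / 40) (n : ℕ) :
    9 ^ (n + n) * exp (-(c₀ * √n / 4) ^ 2 / (2 * δ ^ 2)) ≤ exp (-32 * n) := by
  have h9 : (9 : ℝ) ^ (n + n) ≤ exp (18 * n) := by
    calc (9 : ℝ) ^ (n + n) ≤ exp 9 ^ (n + n) := by
          gcongr; linarith [add_one_le_exp (9 : ℝ)]
      _ = exp (18 * n) := by rw [← exp_nat_mul]; push_cast; ring_nf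
  have hexp : 50 * (n : ℝ) ≤ (c₀ * √n / 4) ^ 2 / (2 * δ ^ 2) := by
    rw [le_div_iff₀ (by positivity), div_pow, mul_pow, sq_sqrt n.cast_nonneg]
    nlinarith [pow_le_pow_left₀ hδ.le hδc 2, n.cast_nonneg (α := ℝ)]
  calc 9 ^ (n + n) * exp (-(c₀ * √n / 4) ^ 2 / (2 * δ ^ 2))
      ≤ exp (18 * n) * exp (-(50 * n)) := by
        gcongr
        rw [neg_div]
        exact neg_le_neg hexp
    _ = exp (-32 * n) := by rw [← exp_add]; ring_nf

theorem perturbed_matrix_well_conditioned_general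
    {c₀ C₀ : ℝ} (hc₀ : 0 < c₀) :
    ∃ δ : ℝ, δ ∈ Set.Ioo (0 : ℝ) 1 ∧ ∃ c : ℝ, 0 < c ∧
      ∀ (n : ℕ) (V : Matrix (Fin n) (Fin n) ℝ),
        (∀ i j, V i j = 1 ∨ V i j = -1) →
        c₀ * Real.sqrt n ≤ sMin V → sMin V ≤ sMax V → sMax V ≤ C₀ * Real.sqrt n →
        ∀ (Ω : Type) [MeasureSpace Ω] [IsProbabilityMeasure (ℙ : Measure Ω)]
          (Y : Ω → Matrix (Fin n) (Fin n) ℝ),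
          (∀ i j, Measurable fun ω => Y ω i j) →
          (∀ i j i' j', (ℙ : Measure Ω).map (fun ω => Y ω i j)
              = (ℙ : Measure Ω).map (fun ω => Y ω i' j')) →
          iIndepFun
            (fun (p : Fin n × Fin n) ω => Y ω p.1 p.2) ℙ →
          (∀ i j, (∫ ω, Y ω i j) = 0) →
          (∀ i j, ∀ᵐ ω ∂(ℙ : Measure Ω), |Y ω i j| ≤ δ) →
          ℙ {ω | condNumber (V + Y ω) ≤ ENNReal.ofReal (4 * C₀ / c₀)}
            ≥ ENNReal.ofReal (1 - Real.exp (-c * n)) := by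
  set δ := min (1 / 2 : ℝ) (c₀ / 40)
  have hδ : 0 < δ := by positivity
  refine ⟨δ, ⟨hδ, (min_le_left _ _).trans_lt (by norm_num)⟩, 32, by norm_num, ?_⟩
  intro n V _ hVmin _ hVmax Ω _ _ Y hYmeas _ hYindep hYmean hYbound
  rcases n.eq_zero_or_pos with rfl | hn
  · simp
  have hsqrt : 0 < √n := by positivity
  have hgood : {ω | 2 * (c₀ * √n / 4) < sMax (Y ω)}ᶜ ⊆
      {ω | condNumber (V + Y ω) ≤ ENNReal.ofReal (4 * C₀ / c₀)} :=
      fun ω (hω : ¬ 2 * (c₀ * √n / 4) < sMax (Y ω)) ↦ by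
    have hVpos : 0 < sMin V := (mul_pos hc₀ hsqrt).trans_le hVmin
    have hC₀ : 0 ≤ C₀ := nonneg_of_mul_nonneg_left ((sMax_nonneg V).trans hVmax) hsqrt
    refine (condNumber_add_le hVpos (by linarith [not_lt.1 hω])).trans (ENNReal.ofReal_le_ofReal ?_)
    calc 3 * (sMax V / sMin V) ≤ 3 * (C₀ * √n / (c₀ * √n)) := by gcongr
      _ ≤ 4 * C₀ / c₀ := by rw [mul_div_mul_right _ _ hsqrt.ne', mul_div_assoc]; gcongr; norm_num
  have hsubG : ∀ i j, HasSubgaussianMGF (fun ω ↦ Y ω i j) (‖δ‖₊ ^ 2) ℙ := fun i j ↦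
    hasSubgaussianMGF_of_abs_le (hYmeas i j).aemeasurable (hYbound i j) (hYmean i j)
  have hbad := measure_lt_sMax_le hYindep hsubG (ε := c₀ * √n / 4) (by positivity)
  rw [NNReal.coe_pow, coe_nnnorm, norm_eq_abs, sq_abs] at hbad
  calc ENNReal.ofReal (1 - exp (-32 * n)) = 1 - ENNReal.ofReal (exp (-32 * n)) := by
        rw [ENNReal.ofReal_sub _ (exp_pos _).le, ENNReal.ofReal_one]
    _ ≤ 1 - ℙ {ω | 2 * (c₀ * √n / 4) < sMax (Y ω)} :=
        tsub_le_tsub_left (hbad.trans (ENNReal.ofReal_le_ofReal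
          (nine_pow_mul_exp_le hδ (min_le_right _ _) n))) 1
    _ ≤ ℙ {ω | 2 * (c₀ * √n / 4) < sMax (Y ω)}ᶜ := one_sub_le_prob_compl _
    _ ≤ _ := measure_mono hgood

/-- **Lemma 3.1.** For all `0 < c₀ ≤ C₀` there are `δ ∈ (0,1)` and `c > 0` such that:
if `V` is an `n × n` matrix with `±1` entries and `c₀√n ≤ s_min(V) ≤ s_max(V) ≤ C₀√n`,
then any `n × n` random matrix `Y` with i.i.d. centered entries bounded by `δ` a.s.
satisfies `P(κ(V+Y) ≤ 4C₀/c₀) ≥ 1 - exp(-cn)`. -/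
theorem perturbed_matrix_well_conditioned
    {c₀ C₀ : ℝ} (hc₀ : 0 < c₀) (hcC : c₀ ≤ C₀) :
    ∃ δ : ℝ, δ ∈ Set.Ioo (0 : ℝ) 1 ∧ ∃ c : ℝ, 0 < c ∧
      ∀ (n : ℕ) (V : Matrix (Fin n) (Fin n) ℝ),
        (∀ i j, V i j = 1 ∨ V i j = -1) →
        c₀ * Real.sqrt n ≤ sMin V → sMin V ≤ sMax V → sMax V ≤ C₀ * Real.sqrt n →
        ∀ (Ω : Type) [MeasureSpace Ω] [IsProbabilityMeasure (ℙ : Measure Ω)]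
          (Y : Ω → Matrix (Fin n) (Fin n) ℝ),
          (∀ i j, Measurable fun ω => Y ω i j) →
          (∀ i j i' j', (ℙ : Measure Ω).map (fun ω => Y ω i j)
              = (ℙ : Measure Ω).map (fun ω => Y ω i' j')) →
          iIndepFun
            (fun (p : Fin n × Fin n) ω => Y ω p.1 p.2) ℙ →
          (∀ i j, (∫ ω, Y ω i j) = 0) →
          (∀ i j, ∀ᵐ ω ∂(ℙ : Measure Ω), |Y ω i j| ≤ δ) →
          ℙ {ω | condNumber (V + Y ω) ≤ ENNReal.ofReal (4 * C₀ / c₀)}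
            ≥ ENNReal.ofReal (1 - Real.exp (-c * n)) :=
  perturbed_matrix_well_conditioned_general hc₀
end
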